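/- arXiv:1308.1123 — 4 statements merged into one kernel-verified Lean document; each statement's English description precedes it below -/
import Mathlib

section
/- Let k ≥ 4 be even and m ≥ 0, and set b(θ) = kθ/2 − 2πm·cos(θ). If α, β ∈ (π/2, 2π/3) are two consecutive zeros of cos(b(θ)) with α < β, then β − α ≤ 2π/(k + 2√3·πm). -/
/-!
On `(π/2, 2π/3)` we have `sin θ > √3/2`, so `b' θ = k/2 + 2πm sin θ ≥ k/2 + √3πm` and, by the mean
value theorem, `b` grows at least at that rate between `α` and `β`. On the other hand `b β - b α ≤ π`:
otherwise `b` would take the value `b α + π` strictly between `α` and `β`, and `cos (b α + π) = 0`.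
-/

open Real Set

lemma sub_le_pi_of_cos_comp_ne_zero {f : ℝ → ℝ} {a b : ℝ} (hab : a ≤ b)
    (hf : ContinuousOn f (Icc a b)) (ha : cos (f a) = 0)
    (hne : ∀ θ ∈ Ioo a b, cos (f θ) ≠ 0) : f b - f a ≤ π := by
  by_contra! h
  obtain ⟨θ, hθ, hfθ⟩ := intermediate_value_Ioo hab hf
    (show f a + π ∈ Ioo (f a) (f b) from ⟨by linarith [pi_pos], by linarith⟩)
  exact hne θ hθ (by rw [hfθ, cos_add_pi, ha, neg_zero])

lemma sqrt_three_div_two_le_sin {θ : ℝ} (h₁ : π / 3 ≤ θ) (h₂ : θ ≤ 2 * π / 3) :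
    √3 / 2 ≤ sin θ := by
  have hsin : sin θ = cos |θ - π / 2| := by
    rw [cos_abs, cos_sub_pi_div_two]
  rw [hsin, ← cos_pi_div_six]
  exact cos_le_cos_of_nonneg_of_le_pi (abs_nonneg _) (by linarith [pi_pos])
    (abs_le.2 ⟨by linarith, by linarith⟩)

lemma hasDerivAt_mul_div_two_sub_mul_cos (k c θ : ℝ) :
    HasDerivAt (fun θ ↦ k * θ / 2 - c * cos θ) (k / 2 + c * sin θ) θ := by
  have hlin : HasDerivAt (fun θ ↦ k * θ / 2) (k / 2) θ := by
    simpa using ((hasDerivAt_id θ).const_mul k).div_const 2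
  exact (hlin.sub ((hasDerivAt_cos θ).const_mul c)).congr_deriv (by ring)

lemma mul_sub_le_sub_mul_div_two_sub_mul_cos {k m a b : ℝ} (hm : 0 ≤ m)
    (ha : π / 3 ≤ a) (hb : b ≤ 2 * π / 3) (hab : a ≤ b) :
    (k / 2 + √3 * π * m) * (b - a) ≤
      (k * b / 2 - 2 * π * m * cos b) - (k * a / 2 - 2 * π * m * cos a) := by
  have hderiv := hasDerivAt_mul_div_two_sub_mul_cos k (2 * π * m)
  refine (convex_Icc a b).mul_sub_le_image_sub_of_le_deriv (by fun_prop)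
    (fun θ _ ↦ (hderiv θ).differentiableAt.differentiableWithinAt) ?_
    a (left_mem_Icc.2 hab) b (right_mem_Icc.2 hab) hab
  intro θ hθ
  rw [interior_Icc] at hθ
  have hsin := sqrt_three_div_two_le_sin (ha.trans hθ.1.le) (hθ.2.le.trans hb)
  have hterm : √3 * π * m ≤ 2 * π * m * sin θ := by
    nlinarith [mul_le_mul_of_nonneg_left hsin (by positivity : (0 : ℝ) ≤ 2 * π * m)]
  rw [(hderiv θ).deriv]
  linarith

theorem stmt3_general (k m : ℤ) (hk : 4 ≤ k) (hm : 0 ≤ m)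
    (b : ℝ → ℝ)
    (hb : ∀ θ, b θ = (k : ℝ) * θ / 2 - 2 * π * (m : ℝ) * Real.cos θ)
    (α β : ℝ) (hα : α ∈ Set.Ioo (π / 2) (2 * π / 3)) (hβ : β ∈ Set.Ioo (π / 2) (2 * π / 3))
    (hαβ : α < β)
    (hzα : Real.cos (b α) = 0)
    (hcons : ∀ θ ∈ Set.Ioo α β, Real.cos (b θ) ≠ 0) :
    β - α ≤ 2 * π / ((k : ℝ) + 2 * Real.sqrt 3 * (m : ℝ) * π) := by
  obtain rfl : b = fun θ ↦ (k : ℝ) * θ / 2 - 2 * π * (m : ℝ) * cos θ := funext hb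
  have hm' : (0 : ℝ) ≤ m := by exact_mod_cast hm
  have hk' : (4 : ℝ) ≤ k := by exact_mod_cast hk
  have hgrowth := mul_sub_le_sub_mul_div_two_sub_mul_cos (k := k) hm'
    (by linarith [hα.1, pi_pos]) hβ.2.le hαβ.le
  have hjump := sub_le_pi_of_cos_comp_ne_zero hαβ.le (by fun_prop) hzα hcons
  rw [le_div_iff₀ (by positivity)]
  linarith

theorem stmt3 (k m : ℤ) (hk : 4 ≤ k) (hke : Even k) (hm : 0 ≤ m)
    (b : ℝ → ℝ)
    (hb : ∀ θ, b θ = (k : ℝ) * θ / 2 - 2 * π * (m : ℝ) * Real.cos θ)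
    (α β : ℝ) (hα : α ∈ Set.Ioo (π / 2) (2 * π / 3)) (hβ : β ∈ Set.Ioo (π / 2) (2 * π / 3))
    (hαβ : α < β)
    (hzα : Real.cos (b α) = 0) (hzβ : Real.cos (b β) = 0)
    (hcons : ∀ θ ∈ Set.Ioo α β, Real.cos (b θ) ≠ 0) :
    β - α ≤ 2 * π / ((k : ℝ) + 2 * Real.sqrt 3 * (m : ℝ) * π) :=
  stmt3_general k m hk hm b hb α β hα hβ hαβ hzα hcons
end

section
/- Let k ≥ 4 be even and m ≥ 0 integers, b(θ) = kθ/2 − 2πm·cos(θ), and b_*(θ) = (k+12)θ/2 − 2πm·cos(θ). If α₁ < α₂ are consecutive zeros of cos(b_*(θ)) in (π/2, 2π/3), then there exists exactly one β ∈ (α₁, α₂) with cos(b(β)) = 0. -/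
/-!
Since `b_* θ = b θ + 6θ`, `b_*` increases by exactly `π` between consecutive zeros `α₁ < α₂`
of `cos ∘ b_*`, so `b` increases by `π - 6(α₂ - α₁) < π` on `[α₁, α₂]`. Hence `b` (which is
strictly increasing there) meets at most one zero of `cos`. It meets `b_*(α₁) - 3π`, because
`6α₁ > 3π` and `6α₂ < 4π` on `(π/2, 2π/3)`.
-/

open Real Set

theorem exists_int_mul_pi_eq_sub_of_cos_eq_zero {x y : ℝ} (hx : cos x = 0) (hy : cos y = 0) :
    ∃ n : ℤ, n * π = y - x :=
  sin_eq_zero_iff.mp (by rw [sin_sub, hx, hy]; ring)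

theorem eq_of_cos_eq_zero_of_abs_sub_lt_pi {x y : ℝ} (hx : cos x = 0) (hy : cos y = 0)
    (hxy : |y - x| < π) : x = y := by
  obtain ⟨n, hn⟩ := exists_int_mul_pi_eq_sub_of_cos_eq_zero hx hy
  have hn0 : n = 0 := by
    rw [← hn, abs_mul, abs_of_pos pi_pos, mul_lt_iff_lt_one_left pi_pos] at hxy
    exact Int.abs_lt_one_iff.mp (by exact_mod_cast hxy)
  rw [hn0, Int.cast_zero, zero_mul] at hn
  linarith

theorem eq_add_pi_of_cos_eq_zero_of_forall_cos_ne_zero {x y : ℝ} (hxy : x < y)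
    (hx : cos x = 0) (hy : cos y = 0) (hne : ∀ z ∈ Ioo x y, cos z ≠ 0) : y = x + π := by
  obtain ⟨n, hn⟩ := exists_int_mul_pi_eq_sub_of_cos_eq_zero hx hy
  have hn_pos : 0 < n := by
    have : (0 : ℝ) < n := pos_of_mul_pos_left (by linarith) pi_pos.le
    exact_mod_cast this
  obtain rfl | hn_two : n = 1 ∨ 2 ≤ n := by omega
  · push_cast at hn
    linarith
  · have : (2 : ℝ) ≤ n := by exact_mod_cast hn_two
    refine absurd ?_ (hne (x + π) ⟨by linarith [pi_pos], by nlinarith [pi_pos]⟩)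
    rw [cos_add_pi, hx, neg_zero]

theorem add_pi_eq_of_cos_comp_eq_zero {f : ℝ → ℝ} {a b : ℝ} (hab : a ≤ b)
    (hf : ContinuousOn f (Icc a b)) (hlt : f a < f b) (ha : cos (f a) = 0) (hb : cos (f b) = 0)
    (hne : ∀ θ ∈ Ioo a b, cos (f θ) ≠ 0) : f b = f a + π := by
  refine eq_add_pi_of_cos_eq_zero_of_forall_cos_ne_zero hlt ha hb ?_
  intro z hz
  obtain ⟨θ, hθ, rfl⟩ := intermediate_value_Ioo hab hf hz
  exact hne θ hθ

theorem existsUnique_cos_comp_eq_zero {f : ℝ → ℝ} {a b t : ℝ} (hab : a ≤ b)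
    (hf : ContinuousOn f (Icc a b)) (hmono : StrictMonoOn f (Icc a b)) (hspan : f b - f a < π)
    (ht : t ∈ Ioo (f a) (f b)) (hct : cos t = 0) :
    ∃! β, β ∈ Ioo a b ∧ cos (f β) = 0 := by
  obtain ⟨β, hβ, rfl⟩ := intermediate_value_Ioo hab hf ht
  refine ⟨β, ⟨hβ, hct⟩, fun γ ⟨hγ, hcγ⟩ => ?_⟩
  have hbounds : ∀ θ ∈ Ioo a b, f a < f θ ∧ f θ < f b := fun θ hθ =>
    ⟨hmono (left_mem_Icc.mpr hab) (Ioo_subset_Icc_self hθ) hθ.1,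
      hmono (Ioo_subset_Icc_self hθ) (right_mem_Icc.mpr hab) hθ.2⟩
  have hγβ : f γ = f β := by
    refine eq_of_cos_eq_zero_of_abs_sub_lt_pi hcγ hct (abs_sub_lt_iff.mpr ?_)
    obtain ⟨hβa, hβb⟩ := hbounds β hβ
    obtain ⟨hγa, hγb⟩ := hbounds γ hγ
    constructor <;> linarith
  exact hmono.injOn (Ioo_subset_Icc_self hγ) (Ioo_subset_Icc_self hβ) hγβ

theorem strictMonoOn_mul_div_two_sub_mul_cos {c a : ℝ} (hc : 0 < c) (ha : 0 ≤ a) :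
    StrictMonoOn (fun θ => c * θ / 2 - a * cos θ) (Icc 0 π) := by
  intro x hx y hy hxy
  have : cos y < cos x := strictAntiOn_cos hx hy hxy
  dsimp only
  nlinarith

theorem stmt5_general (k m : ℤ) (hk : 4 ≤ k) (hm : 0 ≤ m)
    (b bstar : ℝ → ℝ)
    (hb : ∀ θ, b θ = (k : ℝ) * θ / 2 - 2 * π * (m : ℝ) * Real.cos θ)
    (hbstar : ∀ θ, bstar θ = ((k : ℝ) + 12) * θ / 2 - 2 * π * (m : ℝ) * Real.cos θ)
    (α₁ α₂ : ℝ) (hα₁ : α₁ ∈ Set.Ioo (π / 2) (2 * π / 3)) (hα₂ : α₂ ∈ Set.Ioo (π / 2) (2 * π / 3))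
    (h12 : α₁ < α₂)
    (hz1 : Real.cos (bstar α₁) = 0) (hz2 : Real.cos (bstar α₂) = 0)
    (hcons : ∀ θ ∈ Set.Ioo α₁ α₂, Real.cos (bstar θ) ≠ 0) :
    ∃! β, β ∈ Set.Ioo α₁ α₂ ∧ Real.cos (b β) = 0 := by
  obtain ⟨hα₁_lo, -⟩ := hα₁
  obtain ⟨-, hα₂_hi⟩ := hα₂
  have hk_pos : (0 : ℝ) < k := by exact_mod_cast (show 0 < k by omega)
  have ham : (0 : ℝ) ≤ 2 * π * m := by positivity
  have hsub : Icc α₁ α₂ ⊆ Icc 0 π := fun θ hθ => ⟨by linarith [hθ.1], by linarith [hθ.2]⟩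
  have hb_cont : Continuous b := by rw [show b = _ from funext hb]; fun_prop
  have hbstar_cont : Continuous bstar := by rw [show bstar = _ from funext hbstar]; fun_prop
  have hb_mono : StrictMonoOn b (Icc α₁ α₂) := by
    rw [show b = _ from funext hb]; exact (strictMonoOn_mul_div_two_sub_mul_cos hk_pos ham).mono hsub
  have hbstar_mono : StrictMonoOn bstar (Icc α₁ α₂) := by
    rw [show bstar = _ from funext hbstar]
    exact (strictMonoOn_mul_div_two_sub_mul_cos (by linarith) ham).mono hsub
  have hgap : bstar α₂ = bstar α₁ + π :=
    add_pi_eq_of_cos_comp_eq_zero h12.le hbstar_cont.continuousOn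
      (hbstar_mono (left_mem_Icc.mpr h12.le) (right_mem_Icc.mpr h12.le) h12) hz1 hz2 hcons
  have hshift : ∀ θ, bstar θ = b θ + 6 * θ := fun θ => by rw [hb, hbstar]; ring
  have hzero : cos (bstar α₁ - 3 * π) = 0 := by
    rw [show bstar α₁ - 3 * π = bstar α₁ - π - π - π by ring, cos_sub_pi, cos_sub_pi, cos_sub_pi,
      hz1, neg_zero, neg_zero, neg_zero]
  have h₁ := hshift α₁
  have h₂ := hshift α₂
  exact existsUnique_cos_comp_eq_zero h12.le hb_cont.continuousOn hb_mono (by linarith)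
    ⟨by linarith, by linarith⟩ hzero

theorem stmt5 (k m : ℤ) (hk : 4 ≤ k) (hke : Even k) (hm : 0 ≤ m)
    (b bstar : ℝ → ℝ)
    (hb : ∀ θ, b θ = (k : ℝ) * θ / 2 - 2 * π * (m : ℝ) * Real.cos θ)
    (hbstar : ∀ θ, bstar θ = ((k : ℝ) + 12) * θ / 2 - 2 * π * (m : ℝ) * Real.cos θ)
    (α₁ α₂ : ℝ) (hα₁ : α₁ ∈ Set.Ioo (π / 2) (2 * π / 3)) (hα₂ : α₂ ∈ Set.Ioo (π / 2) (2 * π / 3))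
    (h12 : α₁ < α₂)
    (hz1 : Real.cos (bstar α₁) = 0) (hz2 : Real.cos (bstar α₂) = 0)
    (hcons : ∀ θ ∈ Set.Ioo α₁ α₂, Real.cos (bstar θ) ≠ 0) :
    ∃! β, β ∈ Set.Ioo α₁ α₂ ∧ Real.cos (b β) = 0 :=
  stmt5_general k m hk hm b bstar hb hbstar α₁ α₂ hα₁ hα₂ h12 hz1 hz2 hcons
end

section
/- The zeros of cos(kθ/2) in (π/2, 2π/3) interlace with the zeros of cos((k+12)θ/2) in (π/2, 2π/3): the first and last zeros in the interval belong to cos((k+12)θ/2), no zero is shared, and between any two consecutive zeros of cos((k+12)θ/2) there is exactly one zero of cos(kθ/2). -/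
/-!
The zeros of `cos (c θ / 2)` are the odd multiples `m π / c`. For `c = k` and `c = k + 12`,
comparing `m π / k` with `n π / (k + 12)` amounts to the sign of `12 m - (n - m) k`; on
`(π / 2, 2π / 3)` we have `k / 2 < m < 2k / 3`, so it is positive when the even number `n - m`
is at most `6` and negative when it is at least `8`. Hence between the consecutive zeros
`n π / (k + 12)` and `(n + 2) π / (k + 12)` lies exactly the zero `(n - 6) π / k`.
A common zero `θ` would have `6 θ ∈ π ℤ`, impossible for `3π < 6θ < 4π`.
-/

open Real Set

def cosZerosIn (c : ℝ) : Set ℝ := {θ ∈ Ioo (π / 2) (2 * π / 3) | cos (c * θ / 2) = 0}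

def IsZeroIndex (c m : ℤ) : Prop := Odd m ∧ c < 2 * m ∧ 3 * m < 2 * c

lemma intCast_mul_pi_div_lt_iff {a b c d : ℤ} (hb : 0 < b) (hd : 0 < d) :
    (a : ℝ) * π / b < c * π / d ↔ a * d < c * b := by
  rw [div_lt_div_iff₀ (by exact_mod_cast hb) (by exact_mod_cast hd), mul_right_comm,
    mul_right_comm (c : ℝ), mul_lt_mul_iff_of_pos_right pi_pos]
  exact_mod_cast Iff.rfl

lemma intCast_mul_pi_div_mem_Ioo_iff {c m : ℤ} (hc : 0 < c) :
    (m : ℝ) * π / c ∈ Ioo (π / 2) (2 * π / 3) ↔ c < 2 * m ∧ 3 * m < 2 * c := by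
  have h₁ : π / 2 = ((1 : ℤ) : ℝ) * π / (2 : ℤ) := by norm_num
  have h₂ : 2 * π / 3 = ((2 : ℤ) : ℝ) * π / (3 : ℤ) := by norm_num
  rw [mem_Ioo, h₁, h₂, intCast_mul_pi_div_lt_iff two_pos hc,
    intCast_mul_pi_div_lt_iff hc three_pos]
  omega

lemma cos_mul_div_two_eq_zero_iff {c θ : ℝ} (hc : c ≠ 0) :
    cos (c * θ / 2) = 0 ↔ ∃ m : ℤ, Odd m ∧ θ = m * π / c := by
  rw [cos_eq_zero_iff]
  constructor
  · rintro ⟨n, hn⟩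
    refine ⟨2 * n + 1, odd_two_mul_add_one n, ?_⟩
    field_simp at hn ⊢
    push_cast
    linarith
  · rintro ⟨m, ⟨n, rfl⟩, rfl⟩
    refine ⟨n, ?_⟩
    push_cast
    field_simp

lemma mem_cosZerosIn_iff {c : ℤ} (hc : 0 < c) {θ : ℝ} :
    θ ∈ cosZerosIn c ↔ ∃ m, IsZeroIndex c m ∧ θ = m * π / c := by
  rw [cosZerosIn, mem_ofPred_eq, cos_mul_div_two_eq_zero_iff (by positivity)]
  constructor
  · rintro ⟨hθ, m, hm, rfl⟩
    exact ⟨m, ⟨hm, (intCast_mul_pi_div_mem_Ioo_iff hc).1 hθ⟩, rfl⟩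
  · rintro ⟨m, ⟨hm, hmc⟩, rfl⟩
    exact ⟨(intCast_mul_pi_div_mem_Ioo_iff hc).2 hmc, m, hm, rfl⟩

theorem disjoint_cosZerosIn_add_twelve (c : ℝ) :
    Disjoint (cosZerosIn c) (cosZerosIn (c + 12)) := by
  refine Set.disjoint_left.2 fun θ ⟨hθ, hc⟩ ⟨_, hc'⟩ => ?_
  obtain ⟨a, ha⟩ := cos_eq_zero_iff.1 hc
  obtain ⟨b, hb⟩ := cos_eq_zero_iff.1 hc'
  have hθ' : θ = ((b - a : ℤ) : ℝ) * π / (6 : ℤ) := by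
    push_cast
    linear_combination (hb - ha) / 6
  rw [hθ', intCast_mul_pi_div_mem_Ioo_iff (by norm_num)] at hθ
  omega

section AddTwelve

variable {k : ℤ}

lemma IsZeroIndex.pos {m : ℤ} (hm : IsZeroIndex k m) : 0 < k := by
  obtain ⟨-, h₁, h₂⟩ := hm
  omega

lemma IsZeroIndex.mul_add_twelve_lt_or_gt {m n : ℤ} (hm : IsZeroIndex k m) (hn : Odd n) :
    (m + 6 < n ∧ m * (k + 12) < n * k) ∨ (n ≤ m + 6 ∧ n * k < m * (k + 12)) := by
  have hk := hm.pos
  obtain ⟨⟨a, rfl⟩, h₁, h₂⟩ := hm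
  obtain ⟨b, rfl⟩ := hn
  rcases le_or_gt b (a + 3) with hba | hab
  · have : (2 * b + 1) * k ≤ (2 * a + 1 + 6) * k := mul_le_mul_of_nonneg_right (by omega) hk.le
    exact .inr ⟨by omega, by nlinarith⟩
  · have : (2 * a + 1 + 8) * k ≤ (2 * b + 1) * k := mul_le_mul_of_nonneg_right (by omega) hk.le
    exact .inl ⟨by omega, by nlinarith⟩

lemma lt_zero_add_twelve_iff {m n : ℤ} (hm : IsZeroIndex k m) (hn : Odd n) :
    (m : ℝ) * π / k < n * π / (k + 12 : ℤ) ↔ m + 6 < n := by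
  rw [intCast_mul_pi_div_lt_iff hm.pos (by linarith [hm.pos])]
  rcases hm.mul_add_twelve_lt_or_gt hn with ⟨h, h'⟩ | ⟨h, h'⟩
  · exact iff_of_true h' h
  · exact iff_of_false h'.asymm h.not_gt

lemma zero_add_twelve_lt_iff {m n : ℤ} (hm : IsZeroIndex k m) (hn : Odd n) :
    (n : ℝ) * π / (k + 12 : ℤ) < m * π / k ↔ n ≤ m + 6 := by
  rw [intCast_mul_pi_div_lt_iff (by linarith [hm.pos]) hm.pos]
  rcases hm.mul_add_twelve_lt_or_gt hn with ⟨h, h'⟩ | ⟨h, h'⟩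
  · exact iff_of_false h'.asymm h.not_ge
  · exact iff_of_true h' h

theorem exists_mem_cosZerosIn_add_twelve_lt (hk : 0 < k) :
    ∃ α ∈ cosZerosIn (k + 12 : ℤ), ∀ β ∈ cosZerosIn k, α < β := by
  -- the smallest odd `n` with `k + 12 < 2 n`
  have hn : IsZeroIndex (k + 12) (2 * ((k + 14) / 4) + 1) :=
    ⟨odd_two_mul_add_one _, by omega, by omega⟩
  refine ⟨_, (mem_cosZerosIn_iff (by omega)).2 ⟨_, hn, rfl⟩, fun β hβ => ?_⟩
  obtain ⟨m, hm, rfl⟩ := (mem_cosZerosIn_iff hk).1 hβ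
  rw [zero_add_twelve_lt_iff hm hn.1]
  have := Int.odd_iff.1 hm.1
  have := hm.2
  omega

theorem exists_mem_cosZerosIn_add_twelve_gt (hk : 0 < k) :
    ∃ α ∈ cosZerosIn (k + 12 : ℤ), ∀ β ∈ cosZerosIn k, β < α := by
  -- the largest odd `n` with `3 n < 2 (k + 12)`
  have hn : IsZeroIndex (k + 12) (2 * ((k + 10) / 3) + 1) :=
    ⟨odd_two_mul_add_one _, by omega, by omega⟩
  refine ⟨_, (mem_cosZerosIn_iff (by omega)).2 ⟨_, hn, rfl⟩, fun β hβ => ?_⟩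
  obtain ⟨m, hm, rfl⟩ := (mem_cosZerosIn_iff hk).1 hβ
  rw [lt_zero_add_twelve_iff hm hn.1]
  have := Int.odd_iff.1 hm.1
  have := hm.2
  omega

theorem existsUnique_mem_cosZerosIn_Ioo (hk : 0 < k) {α₁ α₂ : ℝ}
    (h₁ : α₁ ∈ cosZerosIn (k + 12 : ℤ)) (h₂ : α₂ ∈ cosZerosIn (k + 12 : ℤ)) (h : α₁ < α₂)
    (hgap : ∀ θ ∈ Ioo α₁ α₂, θ ∉ cosZerosIn (k + 12 : ℤ)) :
    ∃! β, β ∈ Ioo α₁ α₂ ∧ β ∈ cosZerosIn k := by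
  have hK : (0 : ℤ) < k + 12 := by omega
  obtain ⟨n, hn, rfl⟩ := (mem_cosZerosIn_iff hK).1 h₁
  obtain ⟨n', hn', rfl⟩ := (mem_cosZerosIn_iff hK).1 h₂
  have hpar := Int.odd_iff.1 hn.1
  have hpar' := Int.odd_iff.1 hn'.1
  have := hn.2
  have := hn'.2
  rw [intCast_mul_pi_div_lt_iff hK hK, mul_lt_mul_iff_of_pos_right hK] at h
  obtain rfl : n' = n + 2 := by
    by_contra hne
    have hmid : IsZeroIndex (k + 12) (n + 2) := ⟨hn.1.add_even even_two, by omega, by omega⟩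
    refine hgap _ ⟨?_, ?_⟩ ((mem_cosZerosIn_iff hK).2 ⟨_, hmid, rfl⟩) <;>
      rw [intCast_mul_pi_div_lt_iff hK hK, mul_lt_mul_iff_of_pos_right hK] <;> omega
  have hm : IsZeroIndex k (n - 6) := ⟨hn.1.sub_even (by decide), by omega, by omega⟩
  refine ⟨(n - 6 : ℤ) * π / k, ⟨⟨?_, ?_⟩, (mem_cosZerosIn_iff hk).2 ⟨_, hm, rfl⟩⟩, ?_⟩
  · rw [zero_add_twelve_lt_iff hm hn.1]
    omega
  · rw [lt_zero_add_twelve_iff hm hn'.1]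
    omega
  · rintro _ ⟨⟨hβ₁, hβ₂⟩, hβ⟩
    obtain ⟨m, hm', rfl⟩ := (mem_cosZerosIn_iff hk).1 hβ
    rw [zero_add_twelve_lt_iff hm' hn.1] at hβ₁
    rw [lt_zero_add_twelve_iff hm' hn'.1] at hβ₂
    have := Int.odd_iff.1 hm'.1
    obtain rfl : m = n - 6 := by omega
    rfl

end AddTwelve

theorem stmt7_general (k : ℤ) (hk : 4 ≤ k)
    (Z Zstar : Set ℝ)
    (hZ : Z = {θ ∈ Set.Ioo (π / 2) (2 * π / 3) | Real.cos ((k : ℝ) * θ / 2) = 0})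
    (hZstar : Zstar = {θ ∈ Set.Ioo (π / 2) (2 * π / 3) |
      Real.cos (((k : ℝ) + 12) * θ / 2) = 0}) :
    (∃ α ∈ Zstar, ∀ β ∈ Z, α < β) ∧
    (∃ α ∈ Zstar, ∀ β ∈ Z, β < α) ∧
    Z ∩ Zstar = ∅ ∧
    (∀ α₁ ∈ Zstar, ∀ α₂ ∈ Zstar, α₁ < α₂ →
      (∀ θ ∈ Set.Ioo α₁ α₂, θ ∉ Zstar) →
      ∃! β, β ∈ Set.Ioo α₁ α₂ ∧ β ∈ Z) := by
  have hk₀ : 0 < k := by omega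
  change Z = cosZerosIn k at hZ
  change Zstar = cosZerosIn (k + 12) at hZstar
  subst hZ hZstar
  refine ⟨?_, ?_, (disjoint_cosZerosIn_add_twelve _).inter_eq, ?_⟩
  all_goals rw [show (k : ℝ) + 12 = (k + 12 : ℤ) by push_cast; rfl]
  · exact exists_mem_cosZerosIn_add_twelve_lt hk₀
  · exact exists_mem_cosZerosIn_add_twelve_gt hk₀
  · exact fun α₁ h₁ α₂ h₂ => existsUnique_mem_cosZerosIn_Ioo hk₀ h₁ h₂

theorem stmt7 (k : ℤ) (hk : 4 ≤ k) (hke : Even k)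
    (Z Zstar : Set ℝ)
    (hZ : Z = {θ ∈ Set.Ioo (π / 2) (2 * π / 3) | Real.cos ((k : ℝ) * θ / 2) = 0})
    (hZstar : Zstar = {θ ∈ Set.Ioo (π / 2) (2 * π / 3) |
      Real.cos (((k : ℝ) + 12) * θ / 2) = 0}) :
    (∃ α ∈ Zstar, ∀ β ∈ Z, α < β) ∧
    (∃ α ∈ Zstar, ∀ β ∈ Z, β < α) ∧
    Z ∩ Zstar = ∅ ∧
    (∀ α₁ ∈ Zstar, ∀ α₂ ∈ Zstar, α₁ < α₂ →
      (∀ θ ∈ Set.Ioo α₁ α₂, θ ∉ Zstar) →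
      ∃! β, β ∈ Set.Ioo α₁ α₂ ∧ β ∈ Z) :=
  stmt7_general k hk Z Zstar hZ hZstar
end

section
/- Let k ≥ 0 be even and m ≥ 0 integers, b(θ) = kθ/2 − 2πm·cos(θ), b_*(θ) = (k+12)θ/2 − 2πm·cos(θ). Suppose α₁ < β₁ < α₂ < β₂ < α₃ are points of (π/2, 2π/3) where α₁, α₂, α₃ are consecutive zeros of cos(b_*) and β₁, β₂ are consecutive zeros of cos(b). Then β₁ − α₁ < β₂ − α₂ and α₂ − β₁ > α₃ − β₂. -/
/-!
Write `φ = k/2 + 2πm sin` for the derivative of `b`, so that `b_*' = φ + 6` and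
`b_* θ = b θ + 6θ`. On `I` the sine decreases, so `φ` is nonnegative and decreasing: `b` and `b_*`
are increasing and concave there, and between consecutive zeros of `cos ∘ b` or `cos ∘ b_*` the
function increases by exactly `π`. Bounding the increments of `b` and `b_*` over `[α₁, β₁]`,
`[α₂, β₂]` (resp. `[β₁, α₂]`, `[β₂, α₃]`) by endpoint slopes and comparing them through
`b_* = b + 6θ` gives the two inequalities. The second also needs `φ β₁ ≤ φ α₃ + 6`: `sin' = cos`
is at least `-1/2` on `I`, and `m (α₃ - α₁)` is small since `b_*` increases by `2π` on
`[α₁, α₃]` with slope at least `√3 π m`.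
-/

open Real Set

theorem AntitoneOn.mul_sub_le_sub_of_hasDerivAt {f f' : ℝ → ℝ} {x y : ℝ}
    (hf' : AntitoneOn f' (Icc x y)) (hf : ∀ t ∈ Icc x y, HasDerivAt f (f' t) t) (hxy : x ≤ y) :
    f' y * (y - x) ≤ f y - f x := by
  rcases hxy.eq_or_lt with rfl | hxy
  · simp
  obtain ⟨ξ, hξ, hslope⟩ := exists_hasDerivAt_eq_slope f f' hxy
    (fun t ht => (hf t ht).continuousAt.continuousWithinAt)
    (fun t ht => hf t (Ioo_subset_Icc_self ht))
  rw [eq_div_iff (sub_pos.2 hxy).ne'] at hslope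
  rw [← hslope]
  exact mul_le_mul_of_nonneg_right
    (hf' (Ioo_subset_Icc_self hξ) (right_mem_Icc.2 hxy.le) hξ.2.le) (sub_pos.2 hxy).le

theorem AntitoneOn.sub_le_mul_sub_of_hasDerivAt {f f' : ℝ → ℝ} {x y : ℝ}
    (hf' : AntitoneOn f' (Icc x y)) (hf : ∀ t ∈ Icc x y, HasDerivAt f (f' t) t) (hxy : x ≤ y) :
    f y - f x ≤ f' x * (y - x) := by
  rcases hxy.eq_or_lt with rfl | hxy
  · simp
  obtain ⟨ξ, hξ, hslope⟩ := exists_hasDerivAt_eq_slope f f' hxy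
    (fun t ht => (hf t ht).continuousAt.continuousWithinAt)
    (fun t ht => hf t (Ioo_subset_Icc_self ht))
  rw [eq_div_iff (sub_pos.2 hxy).ne'] at hslope
  rw [← hslope]
  exact mul_le_mul_of_nonneg_right
    (hf' (left_mem_Icc.2 hxy.le) (Ioo_subset_Icc_self hξ) hξ.1.le) (sub_pos.2 hxy).le

theorem eq_add_pi_of_consecutive_zeros_cos {f : ℝ → ℝ} {a c : ℝ} (hac : a < c)
    (hf : ContinuousOn f (Icc a c)) (hmono : MonotoneOn f (Icc a c))
    (ha : cos (f a) = 0) (hc : cos (f c) = 0) (hno : ∀ θ ∈ Ioo a c, cos (f θ) ≠ 0) :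
    f c = f a + π := by
  have hlt : f a < f c := by
    by_contra! hca
    have ht : (a + c) / 2 ∈ Ioo a c := ⟨by linarith, by linarith⟩
    have h₁ := hmono (left_mem_Icc.2 hac.le) (Ioo_subset_Icc_self ht) ht.1.le
    have h₂ := hmono (Ioo_subset_Icc_self ht) (right_mem_Icc.2 hac.le) ht.2.le
    exact hno _ ht (by rwa [le_antisymm (h₂.trans hca) h₁])
  have hle : f c ≤ f a + π := by
    by_contra! hlt'
    obtain ⟨t, ht, hft⟩ :=
      intermediate_value_Ioo hac.le hf ⟨lt_add_of_pos_right _ pi_pos, hlt'⟩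
    exact hno t ht (by rw [hft, cos_add_pi, ha, neg_zero])
  obtain ⟨n, hn⟩ := cos_eq_zero_iff.1 ha
  obtain ⟨p, hp⟩ := cos_eq_zero_iff.1 hc
  have hnp : n < p := by
    rw [hn, hp] at hlt
    exact_mod_cast (by nlinarith [pi_pos] : (n : ℝ) < p)
  have hnp' : (n : ℝ) + 1 ≤ p := by exact_mod_cast hnp
  refine le_antisymm hle ?_
  rw [hn, hp]
  nlinarith [pi_pos]

theorem sin_sub_sin_le_half_mul_sub {x y : ℝ} (hx : 0 ≤ x) (hxy : x ≤ y) (hy : y ≤ 2 * π / 3) :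
    sin x - sin y ≤ (y - x) / 2 := by
  have hcos : AntitoneOn cos (Icc x y) :=
    antitoneOn_cos.mono (Icc_subset_Icc hx (by linarith [pi_pos]))
  have hconcave := hcos.mul_sub_le_sub_of_hasDerivAt (fun t _ => hasDerivAt_sin t) hxy
  have hcos_y : -(1 / 2) ≤ cos y := by
    have := antitoneOn_cos ⟨hx.trans hxy, by linarith [pi_pos]⟩
      ⟨by linarith [pi_pos], by linarith [pi_pos]⟩ hy
    rwa [show 2 * π / 3 = π - π / 3 by ring, cos_pi_sub, cos_pi_div_three] at this
  nlinarith

theorem antitoneOn_sin_Icc : AntitoneOn sin (Icc (π / 2) (3 * π / 2)) := fun x hx y hy hxy => by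
  rw [← cos_sub_pi_div_two, ← cos_sub_pi_div_two]
  exact antitoneOn_cos ⟨by linarith [hx.1], by linarith [hx.2]⟩
    ⟨by linarith [hy.1], by linarith [hy.2]⟩ (by linarith)

-- `phase k m` is `b`, `phase (k + 12) m` is `b_*`, and `phaseDeriv k m` is `φ`.
noncomputable def phase (k m θ : ℝ) : ℝ := k * θ / 2 - 2 * π * m * Real.cos θ

noncomputable def phaseDeriv (k m θ : ℝ) : ℝ := k / 2 + 2 * π * m * Real.sin θ

section Phase

variable {k m x y : ℝ}

theorem hasDerivAt_phase (k m θ : ℝ) : HasDerivAt (phase k m) (phaseDeriv k m θ) θ := by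
  have h : HasDerivAt (fun θ => k * θ / 2 - 2 * π * m * cos θ)
      (k * 1 / 2 - 2 * π * m * -sin θ) θ :=
    (((hasDerivAt_id' θ).const_mul k).div_const 2).sub ((hasDerivAt_cos θ).const_mul _)
  exact h.congr_deriv (by simp only [phaseDeriv]; ring)

theorem phase_add_twelve (k m θ : ℝ) : phase (k + 12) m θ = phase k m θ + 6 * θ := by
  simp only [phase]
  ring

theorem phaseDeriv_add_twelve (k m θ : ℝ) : phaseDeriv (k + 12) m θ = phaseDeriv k m θ + 6 := by
  simp only [phaseDeriv]
  ring

theorem antitoneOn_phaseDeriv (hm : 0 ≤ m) :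
    AntitoneOn (phaseDeriv k m) (Icc (π / 2) (2 * π / 3)) := fun x hx y hy hxy => by
  have hsub : Icc (π / 2) (2 * π / 3) ⊆ Icc (π / 2) (3 * π / 2) :=
    Icc_subset_Icc le_rfl (by linarith [pi_pos])
  have := antitoneOn_sin_Icc (hsub hx) (hsub hy) hxy
  simp only [phaseDeriv]
  gcongr

theorem le_phaseDeriv (hm : 0 ≤ m) {θ : ℝ} (hθ : θ ∈ Icc (π / 2) (2 * π / 3)) :
    k / 2 + √3 * π * m ≤ phaseDeriv k m θ := by
  have hsin : sin (2 * π / 3) = √3 / 2 := by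
    rw [show 2 * π / 3 = π - π / 3 by ring, sin_pi_sub, sin_pi_div_three]
  have := antitoneOn_phaseDeriv hm (k := k) hθ ⟨by linarith [pi_pos], le_rfl⟩ hθ.2
  simp only [phaseDeriv, hsin] at this ⊢
  linarith

theorem phaseDeriv_nonneg (hk : 0 ≤ k) (hm : 0 ≤ m) {θ : ℝ}
    (hθ : θ ∈ Icc (π / 2) (2 * π / 3)) : 0 ≤ phaseDeriv k m θ :=
  le_trans (by positivity) (le_phaseDeriv hm hθ)

theorem phaseDeriv_mul_sub_le_phase_sub (hm : 0 ≤ m) (hx : x ∈ Icc (π / 2) (2 * π / 3))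
    (hy : y ∈ Icc (π / 2) (2 * π / 3)) (hxy : x ≤ y) :
    phaseDeriv k m y * (y - x) ≤ phase k m y - phase k m x :=
  ((antitoneOn_phaseDeriv hm).mono (Icc_subset_Icc hx.1 hy.2)).mul_sub_le_sub_of_hasDerivAt
    (fun t _ => hasDerivAt_phase k m t) hxy

theorem phase_sub_le_phaseDeriv_mul_sub (hm : 0 ≤ m) (hx : x ∈ Icc (π / 2) (2 * π / 3))
    (hy : y ∈ Icc (π / 2) (2 * π / 3)) (hxy : x ≤ y) :
    phase k m y - phase k m x ≤ phaseDeriv k m x * (y - x) :=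
  ((antitoneOn_phaseDeriv hm).mono (Icc_subset_Icc hx.1 hy.2)).sub_le_mul_sub_of_hasDerivAt
    (fun t _ => hasDerivAt_phase k m t) hxy

theorem phase_eq_add_pi_of_consecutive_zeros (hk : 0 ≤ k) (hm : 0 ≤ m)
    (hx : x ∈ Icc (π / 2) (2 * π / 3)) (hy : y ∈ Icc (π / 2) (2 * π / 3)) (hxy : x < y)
    (hzx : cos (phase k m x) = 0) (hzy : cos (phase k m y) = 0)
    (hno : ∀ θ ∈ Ioo x y, cos (phase k m θ) ≠ 0) : phase k m y = phase k m x + π := by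
  have hsub : Icc x y ⊆ Icc (π / 2) (2 * π / 3) := Icc_subset_Icc hx.1 hy.2
  have hmono : MonotoneOn (phase k m) (Icc x y) := fun s hs t ht hst => by
    have := phaseDeriv_mul_sub_le_phase_sub hm (hsub hs) (hsub ht) hst (k := k)
    nlinarith [phaseDeriv_nonneg hk hm (hsub ht)]
  exact eq_add_pi_of_consecutive_zeros_cos hxy
    (fun t _ => (hasDerivAt_phase k m t).continuousAt.continuousWithinAt) hmono hzx hzy hno

theorem pi_mul_mul_sub_le_six (hk : 0 ≤ k) (hm : 0 ≤ m) (hx : x ∈ Icc (π / 2) (2 * π / 3))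
    (hy : y ∈ Icc (π / 2) (2 * π / 3)) (hxy : x ≤ y) (h : phase k m y ≤ phase k m x + 2 * π) :
    π * m * (y - x) ≤ 6 := by
  have hslope := phaseDeriv_mul_sub_le_phase_sub hm hx hy hxy (k := k)
  have hsqrt : 4 / 3 ≤ √3 := by rw [le_sqrt] <;> norm_num
  have hlen : 0 ≤ π * m * (y - x) := mul_nonneg (by positivity) (sub_nonneg.2 hxy)
  nlinarith [le_phaseDeriv hm hy (k := k), pi_le_four, mul_le_mul_of_nonneg_right hsqrt hlen]

theorem phaseDeriv_le_add_six (hm : 0 ≤ m) (hx : x ∈ Icc (π / 2) (2 * π / 3))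
    (hy : y ∈ Icc (π / 2) (2 * π / 3)) (hxy : x ≤ y) (h : π * m * (y - x) ≤ 6) :
    phaseDeriv k m x ≤ phaseDeriv k m y + 6 := by
  have hsin := sin_sub_sin_le_half_mul_sub (by linarith [hx.1, pi_pos]) hxy hy.2
  have := mul_le_mul_of_nonneg_left hsin (by positivity : 0 ≤ 2 * π * m)
  simp only [phaseDeriv]
  nlinarith

end Phase

section Gaps

variable {k m α₁ β₁ α₂ β₂ α₃ : ℝ}

theorem sub_lt_sub_of_phase_add_pi (hk : 0 ≤ k) (hm : 0 ≤ m)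
    (hα₁ : α₁ ∈ Icc (π / 2) (2 * π / 3)) (hβ₁ : β₁ ∈ Icc (π / 2) (2 * π / 3))
    (hα₂ : α₂ ∈ Icc (π / 2) (2 * π / 3)) (hβ₂ : β₂ ∈ Icc (π / 2) (2 * π / 3))
    (h₁ : α₁ ≤ β₁) (h₂ : β₁ < α₂) (h₃ : α₂ ≤ β₂)
    (hα : phase (k + 12) m α₂ = phase (k + 12) m α₁ + π)
    (hβ : phase k m β₂ = phase k m β₁ + π) :
    β₁ - α₁ < β₂ - α₂ := by
  have hupper := phase_sub_le_phaseDeriv_mul_sub hm hα₂ hβ₂ h₃ (k := k)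
  have hlower := phaseDeriv_mul_sub_le_phase_sub hm hα₁ hβ₁ h₁ (k := k + 12)
  simp only [phase_add_twelve, phaseDeriv_add_twelve] at hα hlower
  have hanti : phaseDeriv k m α₂ ≤ phaseDeriv k m β₁ := antitoneOn_phaseDeriv hm hβ₁ hα₂ h₂.le
  have hgain : 0 < phaseDeriv k m α₂ * ((β₂ - α₂) - (β₁ - α₁)) := by
    nlinarith [mul_le_mul_of_nonneg_right hanti (sub_nonneg.2 h₁)]
  linarith [pos_of_mul_pos_right hgain (phaseDeriv_nonneg hk hm hα₂)]

theorem sub_lt_sub_of_phase_add_pi_of_phaseDeriv_le (hk : 0 ≤ k) (hm : 0 ≤ m)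
    (hβ₁ : β₁ ∈ Icc (π / 2) (2 * π / 3)) (hα₂ : α₂ ∈ Icc (π / 2) (2 * π / 3))
    (hβ₂ : β₂ ∈ Icc (π / 2) (2 * π / 3)) (hα₃ : α₃ ∈ Icc (π / 2) (2 * π / 3))
    (h₂ : β₁ ≤ α₂) (h₃ : α₂ < β₂) (h₄ : β₂ ≤ α₃)
    (hα : phase (k + 12) m α₃ = phase (k + 12) m α₂ + π)
    (hβ : phase k m β₂ = phase k m β₁ + π)
    (hslope : phaseDeriv k m β₁ ≤ phaseDeriv k m α₃ + 6) :
    α₃ - β₂ < α₂ - β₁ := by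
  have hupper := phase_sub_le_phaseDeriv_mul_sub hm hβ₁ hα₂ h₂ (k := k)
  have hlower := phaseDeriv_mul_sub_le_phase_sub hm hβ₂ hα₃ h₄ (k := k + 12)
  simp only [phase_add_twelve, phaseDeriv_add_twelve] at hα hlower
  have hgain : 0 < (phaseDeriv k m α₃ + 6) * ((α₂ - β₁) - (α₃ - β₂)) := by
    nlinarith [mul_le_mul_of_nonneg_right hslope (sub_nonneg.2 h₂)]
  linarith [pos_of_mul_pos_right hgain (by linarith [phaseDeriv_nonneg hk hm hα₃])]

end Gaps

theorem stmt9_general (k m : ℤ) (hk : 0 ≤ k) (hm : 0 ≤ m)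
    (b bstar : ℝ → ℝ)
    (hb : ∀ θ, b θ = (k : ℝ) * θ / 2 - 2 * π * (m : ℝ) * Real.cos θ)
    (hbstar : ∀ θ, bstar θ = ((k : ℝ) + 12) * θ / 2 - 2 * π * (m : ℝ) * Real.cos θ)
    (α₁ β₁ α₂ β₂ α₃ : ℝ)
    (hmem : α₁ ∈ Set.Ioo (π / 2) (2 * π / 3) ∧ β₁ ∈ Set.Ioo (π / 2) (2 * π / 3) ∧
      α₂ ∈ Set.Ioo (π / 2) (2 * π / 3) ∧ β₂ ∈ Set.Ioo (π / 2) (2 * π / 3) ∧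
      α₃ ∈ Set.Ioo (π / 2) (2 * π / 3))
    (hord : α₁ < β₁ ∧ β₁ < α₂ ∧ α₂ < β₂ ∧ β₂ < α₃)
    (hzα : Real.cos (bstar α₁) = 0 ∧ Real.cos (bstar α₂) = 0 ∧ Real.cos (bstar α₃) = 0)
    (hconsα₁ : ∀ θ ∈ Set.Ioo α₁ α₂, Real.cos (bstar θ) ≠ 0)
    (hconsα₂ : ∀ θ ∈ Set.Ioo α₂ α₃, Real.cos (bstar θ) ≠ 0)
    (hzβ : Real.cos (b β₁) = 0 ∧ Real.cos (b β₂) = 0)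
    (hconsβ : ∀ θ ∈ Set.Ioo β₁ β₂, Real.cos (b θ) ≠ 0) :
    β₁ - α₁ < β₂ - α₂ ∧ α₂ - β₁ > α₃ - β₂ := by
  obtain ⟨hα₁, hβ₁, hα₂, hβ₂, hα₃⟩ := hmem
  replace hα₁ := Ioo_subset_Icc_self hα₁
  replace hβ₁ := Ioo_subset_Icc_self hβ₁
  replace hα₂ := Ioo_subset_Icc_self hα₂
  replace hβ₂ := Ioo_subset_Icc_self hβ₂
  replace hα₃ := Ioo_subset_Icc_self hα₃
  obtain ⟨h₁, h₂, h₃, h₄⟩ := hord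
  obtain ⟨hzα₁, hzα₂, hzα₃⟩ := hzα
  obtain ⟨hzβ₁, hzβ₂⟩ := hzβ
  obtain rfl : b = phase k m := funext hb
  obtain rfl : bstar = phase (k + 12) m := funext hbstar
  have hk : (0 : ℝ) ≤ k := Int.cast_nonneg hk
  have hm : (0 : ℝ) ≤ m := Int.cast_nonneg hm
  have hk₁₂ : (0 : ℝ) ≤ k + 12 := by linarith
  have hα₁₂ :=
    phase_eq_add_pi_of_consecutive_zeros hk₁₂ hm hα₁ hα₂ (by linarith) hzα₁ hzα₂ hconsα₁
  have hα₂₃ :=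
    phase_eq_add_pi_of_consecutive_zeros hk₁₂ hm hα₂ hα₃ (by linarith) hzα₂ hzα₃ hconsα₂
  have hβ₁₂ := phase_eq_add_pi_of_consecutive_zeros hk hm hβ₁ hβ₂ (by linarith) hzβ₁ hzβ₂ hconsβ
  have hspan := pi_mul_mul_sub_le_six hk₁₂ hm hα₁ hα₃ (by linarith) (by linarith)
  have hslope : phaseDeriv k m β₁ ≤ phaseDeriv k m α₃ + 6 :=
    phaseDeriv_le_add_six hm hβ₁ hα₃ (by linarith) <|
      (mul_le_mul_of_nonneg_left (by linarith) (by positivity)).trans hspan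
  exact ⟨sub_lt_sub_of_phase_add_pi hk hm hα₁ hβ₁ hα₂ hβ₂ h₁.le h₂ h₃.le hα₁₂ hβ₁₂,
    sub_lt_sub_of_phase_add_pi_of_phaseDeriv_le hk hm hβ₁ hα₂ hβ₂ hα₃ h₂.le h₃ h₄.le hα₂₃ hβ₁₂
      hslope⟩

theorem stmt9 (k m : ℤ) (hk : 0 ≤ k) (hke : Even k) (hm : 0 ≤ m)
    (b bstar : ℝ → ℝ)
    (hb : ∀ θ, b θ = (k : ℝ) * θ / 2 - 2 * π * (m : ℝ) * Real.cos θ)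
    (hbstar : ∀ θ, bstar θ = ((k : ℝ) + 12) * θ / 2 - 2 * π * (m : ℝ) * Real.cos θ)
    (α₁ β₁ α₂ β₂ α₃ : ℝ)
    (hmem : α₁ ∈ Set.Ioo (π / 2) (2 * π / 3) ∧ β₁ ∈ Set.Ioo (π / 2) (2 * π / 3) ∧
      α₂ ∈ Set.Ioo (π / 2) (2 * π / 3) ∧ β₂ ∈ Set.Ioo (π / 2) (2 * π / 3) ∧
      α₃ ∈ Set.Ioo (π / 2) (2 * π / 3))
    (hord : α₁ < β₁ ∧ β₁ < α₂ ∧ α₂ < β₂ ∧ β₂ < α₃)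
    (hzα : Real.cos (bstar α₁) = 0 ∧ Real.cos (bstar α₂) = 0 ∧ Real.cos (bstar α₃) = 0)
    (hconsα₁ : ∀ θ ∈ Set.Ioo α₁ α₂, Real.cos (bstar θ) ≠ 0)
    (hconsα₂ : ∀ θ ∈ Set.Ioo α₂ α₃, Real.cos (bstar θ) ≠ 0)
    (hzβ : Real.cos (b β₁) = 0 ∧ Real.cos (b β₂) = 0)
    (hconsβ : ∀ θ ∈ Set.Ioo β₁ β₂, Real.cos (b θ) ≠ 0) :
    β₁ - α₁ < β₂ - α₂ ∧ α₂ - β₁ > α₃ - β₂ :=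
  stmt9_general k m hk hm b bstar hb hbstar α₁ β₁ α₂ β₂ α₃ hmem hord hzα hconsα₁ hconsα₂ hzβ hconsβ
end
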